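/- arXiv:2009.09625 — 4 statements merged into one kernel-verified Lean document; each statement's English description precedes it below -/
import Mathlib

section
/- Let Γ be a unit-speed line of curvature on a surface Σ with constant geodesic curvature c ≠ 0, nonvanishing normal curvature, and nowhere-vanishing torsion τ. With θ the angle function satisfying κ cos θ = ±c (κ the space-curve curvature of Γ), one has (D_t κ)/(τκ) = -tan θ, and consequently (1/κ)² + ((D_t(1/κ))/τ)² = 1/c². -/
/-- with `κ cos θ = c` constant and nonzero, `τ = -θ'`, and nonvanishing
normal curvature `κ sin θ`, one has `κ'/(τκ) = -tan θ` and consequently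
`(1/κ)² + ((1/κ)'/τ)² = 1/c²`. -/
theorem curvature_torsion_identity
    (a b c : ℝ) (hc : c ≠ 0) (κ τ θ : ℝ → ℝ)
    (hκd : ∀ s ∈ Set.Ioo a b, DifferentiableAt ℝ κ s)
    (hθd : ∀ s ∈ Set.Ioo a b, DifferentiableAt ℝ θ s)
    (hκne : ∀ s ∈ Set.Ioo a b, κ s ≠ 0)
    (hτne : ∀ s ∈ Set.Ioo a b, τ s ≠ 0)
    -- nonvanishing normal curvature `κ sin θ`
    (hnormal : ∀ s ∈ Set.Ioo a b, κ s * Real.sin (θ s) ≠ 0)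
    -- constant geodesic curvature `κ cos θ = c`
    (hgeo : ∀ s ∈ Set.Ioo a b, κ s * Real.cos (θ s) = c)
    -- line-of-curvature relation `τ = -D_t θ`
    (hτθ : ∀ s ∈ Set.Ioo a b, τ s = -deriv θ s) :
    ∀ s ∈ Set.Ioo a b,
      deriv κ s / (τ s * κ s) = -Real.tan (θ s) ∧
      (1 / κ s) ^ 2 + (deriv (fun u => 1 / κ u) s / τ s) ^ 2 = 1 / c ^ 2 := by
  intro s hs
  have hmem : Set.Ioo a b ∈ nhds s := (isOpen_Ioo).mem_nhds hs
  have hκs := hκd s hs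
  have hθs := hθd s hs
  have hκn := hκne s hs
  have hτn := hτne s hs
  have hcos : Real.cos (θ s) ≠ 0 := by
    intro h
    apply hc
    rw [← hgeo s hs, h, mul_zero]
  have hsin : Real.sin (θ s) ≠ 0 := by
    intro h
    exact hnormal s hs (by rw [h, mul_zero])
  -- derivative of κ * cos θ is zero
  have hcd : HasDerivAt (fun u => κ u * Real.cos (θ u)) 0 s := by
    have heq : (fun u => κ u * Real.cos (θ u)) =ᶠ[nhds s] (fun _ => c) := by
      filter_upwards [hmem] with u hu using hgeo u hu
    exact (hasDerivAt_const s c).congr_of_eventuallyEq heq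
  -- explicit derivative
  have hcd2 : HasDerivAt (fun u => κ u * Real.cos (θ u))
      (deriv κ s * Real.cos (θ s) + κ s * (-Real.sin (θ s) * deriv θ s)) s := by
    exact (hκs.hasDerivAt).mul ((Real.hasDerivAt_cos (θ s)).comp s hθs.hasDerivAt)
  have hkey : deriv κ s * Real.cos (θ s) + κ s * (-Real.sin (θ s) * deriv θ s) = 0 :=
    hcd2.unique hcd
  have hθ' : deriv θ s = -τ s := by
    have := hτθ s hs; linarith
  rw [hθ'] at hkey
  have hκ' : deriv κ s = -(κ s * Real.sin (θ s) * τ s) / Real.cos (θ s) := by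
    field_simp
    nlinarith [hkey]
  have h1 : deriv κ s / (τ s * κ s) = -Real.tan (θ s) := by
    rw [hκ', Real.tan_eq_sin_div_cos]
    field_simp
  refine ⟨h1, ?_⟩
  -- derivative of 1/κ
  have hinv : deriv (fun u => 1 / κ u) s = -(deriv κ s) / (κ s) ^ 2 := by
    have : HasDerivAt (fun u => 1 / κ u) (-(deriv κ s) / (κ s) ^ 2) s := by
      simpa only [one_div, Pi.inv_def] using (hκs.hasDerivAt.inv hκn)
    exact this.deriv
  rw [hinv, hκ']
  have hc2 : κ s * Real.cos (θ s) = c := hgeo s hs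
  have hpyth : Real.sin (θ s) ^ 2 + Real.cos (θ s) ^ 2 = 1 := Real.sin_sq_add_cos_sq (θ s)
  field_simp
  linear_combination (c ^ 2) * hpyth -
    (c + κ s * Real.cos (θ s)) * hc2
end

section
/- Let f be holomorphic on the annulus A(1,R) = {z ∈ ℂ : 1 < |z| < R}, continuous up to the boundary, and suppose Im f vanishes on both boundary circles |z| = 1 and |z| = R. Then f is a real constant on A(1,R). -/
open Set

/-- The annulus is preconnected, as the continuous image of `Ioo 1 R ×ˢ univ`. -/
lemma annulus_preconnected (R : ℝ) :
    IsPreconnected {z : ℂ | 1 < ‖z‖ ∧ ‖z‖ < R} := by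
  have hcont : Continuous fun p : ℝ × ℝ => (p.1 : ℂ) * Complex.exp (p.2 * Complex.I) := by
    continuity
  have himg : (fun p : ℝ × ℝ => (p.1 : ℂ) * Complex.exp (p.2 * Complex.I)) ''
      (Ioo 1 R ×ˢ (univ : Set ℝ)) = {z : ℂ | 1 < ‖z‖ ∧ ‖z‖ < R} := by
    ext z
    constructor
    · rintro ⟨⟨r, θ⟩, ⟨⟨hr1, hr2⟩, -⟩, rfl⟩
      have habs : ‖(r : ℂ) * Complex.exp (θ * Complex.I)‖ = r := by
        rw [norm_mul, Complex.norm_exp]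
        simp [abs_of_pos (lt_trans one_pos hr1)]
      exact ⟨by rw [habs]; exact hr1, by rw [habs]; exact hr2⟩
    · rintro ⟨h1, h2⟩
      refine ⟨(‖z‖, Complex.arg z), ⟨⟨h1, h2⟩, trivial⟩, ?_⟩
      exact Complex.norm_mul_exp_arg_mul_I z
  rw [← himg]
  exact ((isPreconnected_Ioo).prod isPreconnected_univ).image _ hcont.continuousOn

lemma annulus_frontier (R : ℝ) {z : ℂ}
    (hz : z ∈ frontier {z : ℂ | 1 < ‖z‖ ∧ ‖z‖ < R}) :
    ‖z‖ = 1 ∨ ‖z‖ = R := by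
  have hopen : IsOpen {z : ℂ | 1 < ‖z‖ ∧ ‖z‖ < R} :=
    (isOpen_lt continuous_const continuous_norm).inter
      (isOpen_lt continuous_norm continuous_const)
  have hclo : closure {z : ℂ | 1 < ‖z‖ ∧ ‖z‖ < R}
      ⊆ {z : ℂ | 1 ≤ ‖z‖ ∧ ‖z‖ ≤ R} := by
    apply closure_minimal
    · intro w hw
      exact ⟨le_of_lt hw.1, le_of_lt hw.2⟩
    exact (isClosed_le continuous_const continuous_norm).inter
      (isClosed_le continuous_norm continuous_const)
  have h1 := hclo hz.1
  have h2 : z ∉ {z : ℂ | 1 < ‖z‖ ∧ ‖z‖ < R} := by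
    rw [← hopen.interior_eq]; exact hz.2
  simp only [mem_setOf_eq, not_and_or, not_lt] at h2
  rcases h2 with h2 | h2
  · exact Or.inl (le_antisymm h2 h1.1)
  · exact Or.inr (le_antisymm h1.2 h2)

/-- a function holomorphic on the annulus `A(1,R)`, continuous up to the
boundary, whose imaginary part vanishes on both boundary circles, is a real constant. -/
theorem holomorphic_real_on_annulus_boundary_is_const
    (R : ℝ) (hR : 1 < R) (f : ℂ → ℂ)
    (hcont : ContinuousOn f (closure {z : ℂ | 1 < ‖z‖ ∧ ‖z‖ < R}))
    (hholo : DifferentiableOn ℂ f {z : ℂ | 1 < ‖z‖ ∧ ‖z‖ < R})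
    (hb1 : ∀ z : ℂ, ‖z‖ = 1 → (f z).im = 0)
    (hb2 : ∀ z : ℂ, ‖z‖ = R → (f z).im = 0) :
    ∃ c : ℝ, ∀ z ∈ {z : ℂ | 1 < ‖z‖ ∧ ‖z‖ < R}, f z = c := by
  set A := {z : ℂ | 1 < ‖z‖ ∧ ‖z‖ < R} with hA
  have hopen : IsOpen A :=
    (isOpen_lt continuous_const continuous_norm).inter
      (isOpen_lt continuous_norm continuous_const)
  have hbdd : Bornology.IsBounded A := by
    apply (Metric.isBounded_ball (x := (0 : ℂ)) (r := R)).subset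
    intro z hz
    simpa [Complex.dist_eq] using hz.2
  have hbim : ∀ z ∈ frontier A, (f z).im = 0 := by
    intro z hz
    rcases annulus_frontier R hz with h | h
    · exact hb1 z h
    · exact hb2 z h
  -- Im f = 0 on A via maximum modulus applied to exp(±I * f)
  have him : ∀ z ∈ A, (f z).im = 0 := by
    intro z hz
    have hzc : z ∈ closure A := subset_closure hz
    have key : ∀ (s : ℝ), s = 1 ∨ s = -1 →
        ‖Complex.exp ((s : ℂ) * Complex.I * f z)‖ ≤ 1 := by
      intro s hs
      refine Complex.norm_le_of_forall_mem_frontier_norm_le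
        (f := fun w => Complex.exp ((s : ℂ) * Complex.I * f w)) hbdd ⟨?_, ?_⟩ ?_ hzc
      · exact (Complex.differentiable_exp.comp_differentiableOn
          ((differentiableOn_const _).mul hholo))
      · exact Complex.continuous_exp.comp_continuousOn
          ((continuousOn_const).mul hcont)
      · intro w hw
        have h0 : (f w).im = 0 := hbim w hw
        rw [Complex.norm_exp]
        have : ((s : ℂ) * Complex.I * f w).re = 0 := by
          simp [Complex.mul_re, Complex.mul_im, h0]
        rw [this, Real.exp_zero]
    have h1 := key 1 (Or.inl rfl)
    have h2 := key (-1) (Or.inr rfl)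
    rw [Complex.norm_exp] at h1 h2
    have e1 : ((1 : ℝ) * Complex.I * f z).re = -(f z).im := by
      simp [Complex.mul_re, Complex.mul_im]
    have e2 : (((-1 : ℝ) : ℂ) * Complex.I * f z).re = (f z).im := by
      simp [Complex.mul_re, Complex.mul_im]
    rw [e1] at h1
    rw [e2] at h2
    have l1 : -(f z).im ≤ 0 := by
      have := Real.exp_le_exp.mp (by simpa using h1)
      linarith
    have l2 : (f z).im ≤ 0 := by
      have := Real.exp_le_exp.mp (by simpa using h2)
      linarith
    linarith
  -- f is constant on A by the open mapping theorem
  have hconn : IsPreconnected A := annulus_preconnected R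
  have hg : AnalyticOnNhd ℂ f A := hholo.analyticOnNhd hopen
  rcases hg.is_constant_or_isOpen hconn with ⟨w, hw⟩ | hopenmap
  · -- constant case
    have habs : ‖((1 + R) / 2 : ℂ)‖ = (1 + R) / 2 := by
      rw [show ((1 + R) / 2 : ℂ) = (((1 + R) / 2 : ℝ) : ℂ) by push_cast; ring,
        Complex.norm_real, Real.norm_eq_abs, abs_of_pos (by linarith)]
    have hmem : ((1 + R) / 2 : ℂ) ∈ A :=
      ⟨by rw [habs]; linarith, by rw [habs]; linarith⟩
    have hwim : w.im = 0 := by rw [← hw _ hmem]; exact him _ hmem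
    refine ⟨w.re, fun z hz => ?_⟩
    rw [hw z hz, Complex.ext_iff]
    simp [hwim]
  · -- open case: contradiction, since f '' A ⊆ ℝ
    exfalso
    have habs : ‖((1 + R) / 2 : ℂ)‖ = (1 + R) / 2 := by
      rw [show ((1 + R) / 2 : ℂ) = (((1 + R) / 2 : ℝ) : ℂ) by push_cast; ring,
        Complex.norm_real, Real.norm_eq_abs, abs_of_pos (by linarith)]
    have hmem : ((1 + R) / 2 : ℂ) ∈ A :=
      ⟨by rw [habs]; linarith, by rw [habs]; linarith⟩
    have hio : IsOpen (f '' A) := hopenmap A (subset_refl _) hopen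
    obtain ⟨ε, hε, hball⟩ := Metric.isOpen_iff.mp hio _ ⟨_, hmem, rfl⟩
    have hmem2 : f ((1 + R) / 2 : ℂ) + (ε / 2) * Complex.I ∈ f '' A := by
      apply hball
      simp [Complex.dist_eq, Complex.norm_real, abs_of_pos hε, abs_of_pos (half_pos hε),
        half_lt_self hε]
    obtain ⟨z, hz, hfz⟩ := hmem2
    have := him z hz
    rw [hfz] at this
    simp [him _ hmem] at this
    linarith
end

section
/- Let Φ dz² be the Hopf differential of a conformal minimal immersion F : A(1,R) → ℝ³ (Φ = F_zz · N holomorphic) such that both boundary circles |z|=1 and |z|=R are lines of curvature, i.e. Im(z²Φ(z)) = 0 on both boundary circles. Then z²Φ(z) ≡ C₀ for some real constant C₀, so the second fundamental form equals Re{(C₀/z²) dz²}. -/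
open Set Metric


/-- if the Hopf differential `Φ dz²` of a conformal minimal immersion of
the annulus `A(1,R)` is holomorphic, continuous up to the boundary, and both boundary
circles are lines of curvature (`Im(z²Φ(z)) = 0` there), then `z²Φ(z) ≡ C₀` for a real
constant `C₀`; equivalently `Φ(z) = C₀/z²`, so the second fundamental form is
`Re{(C₀/z²) dz²}`. -/
theorem hopf_differential_constant
    (R : ℝ) (hR : 1 < R) (Φ : ℂ → ℂ)
    (hcont : ContinuousOn (fun z => z ^ 2 * Φ z)
      (closure {z : ℂ | 1 < ‖z‖ ∧ ‖z‖ < R}))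
    (hholo : DifferentiableOn ℂ Φ {z : ℂ | 1 < ‖z‖ ∧ ‖z‖ < R})
    (hb1 : ∀ z : ℂ, ‖z‖ = 1 → (z ^ 2 * Φ z).im = 0)
    (hb2 : ∀ z : ℂ, ‖z‖ = R → (z ^ 2 * Φ z).im = 0) :
    ∃ C₀ : ℝ, ∀ z ∈ {z : ℂ | 1 < ‖z‖ ∧ ‖z‖ < R},
      z ^ 2 * Φ z = (C₀ : ℂ) ∧ Φ z = (C₀ : ℂ) / z ^ 2 := by
  set U : Set ℂ := {z : ℂ | 1 < ‖z‖ ∧ ‖z‖ < R} with hU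
  set g : ℂ → ℂ := fun z => z ^ 2 * Φ z with hg
  -- U is open
  have hUopen : IsOpen U := by
    have : U = (fun z : ℂ => ‖z‖) ⁻¹' (Ioo 1 R) := rfl
    rw [this]
    exact (isOpen_Ioo).preimage continuous_norm
  -- U is bounded
  have hUbdd : Bornology.IsBounded U := by
    apply (Metric.isBounded_closedBall (x := (0:ℂ)) (r := R)).subset
    intro z hz
    simp only [Metric.mem_closedBall, Complex.dist_eq, sub_zero]
    exact le_of_lt hz.2
  -- g is differentiable on U
  have hgdiff : DifferentiableOn ℂ g U :=
    (differentiable_pow 2).differentiableOn.mul hholo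
  -- frontier points have abs = 1 or abs = R
  have hfr : ∀ z ∈ frontier U, ‖z‖ = 1 ∨ ‖z‖ = R := by
    intro z hz
    have hcl : z ∈ closure U := hz.1
    have h1 : 1 ≤ ‖z‖ ∧ ‖z‖ ≤ R := by
      have : closure U ⊆ {z : ℂ | 1 ≤ ‖z‖ ∧ ‖z‖ ≤ R} := by
        apply closure_minimal
        · intro w hw; exact ⟨le_of_lt hw.1, le_of_lt hw.2⟩
        · have : {z : ℂ | 1 ≤ ‖z‖ ∧ ‖z‖ ≤ R}
              = (fun z : ℂ => ‖z‖) ⁻¹' (Icc 1 R) := rfl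
          rw [this]; exact isClosed_Icc.preimage continuous_norm
      exact this hcl
    have hnot : z ∉ U := by
      have := hz.2
      rwa [hUopen.interior_eq] at this
    rcases lt_or_eq_of_le h1.1 with h | h
    · rcases lt_or_eq_of_le h1.2 with h' | h'
      · exact absurd ⟨h, h'⟩ hnot
      · exact Or.inr h'
    · exact Or.inl h.symm
  -- Im g vanishes on frontier
  have hfrim : ∀ z ∈ frontier U, (g z).im = 0 := by
    intro z hz
    rcases hfr z hz with h | h
    · exact hb1 z h
    · exact hb2 z h
  -- maximum modulus argument: Im g = 0 on closure U
  have him : ∀ z ∈ closure U, (g z).im = 0 := by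
    have key : ∀ (c : ℂ), c.re = 0 → ∀ z ∈ closure U, ‖Complex.exp (c * g z)‖ ≤ 1 := by
      intro c hc z hz
      have hdc : DiffContOnCl ℂ (fun z => Complex.exp (c * g z)) U := by
        refine ⟨((differentiableOn_const c).mul hgdiff).cexp, ?_⟩
        exact (continuousOn_const.mul hcont).cexp
      refine Complex.norm_le_of_forall_mem_frontier_norm_le hUbdd hdc ?_ hz
      intro w hw
      rw [Complex.norm_exp]
      have : (c * g w).re = c.re * (g w).re - c.im * (g w).im := Complex.mul_re c (g w)
      rw [this, hfrim w hw, hc]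
      simp
    intro z hz
    have h1 := key Complex.I (by simp) z hz
    have h2 := key (-Complex.I) (by simp) z hz
    rw [Complex.norm_exp] at h1 h2
    have e1 : (Complex.I * g z).re = -(g z).im := by
      simp [Complex.mul_re]
    have e2 : ((-Complex.I) * g z).re = (g z).im := by
      simp [Complex.mul_re]
    rw [e1] at h1; rw [e2] at h2
    have h1' : -(g z).im ≤ 0 := by
      by_contra h; push_neg at h
      have := Real.exp_lt_exp.mpr (show (0:ℝ) < -(g z).im from h)
      rw [Real.exp_zero] at this; linarith
    have h2' : (g z).im ≤ 0 := by
      by_contra h; push_neg at h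
      have := Real.exp_lt_exp.mpr (show (0:ℝ) < (g z).im from h)
      rw [Real.exp_zero] at this; linarith
    linarith
  -- U is preconnected
  have hUconn : IsPreconnected U := by
    have h2 : (1 : Cardinal) < Module.rank ℝ ℂ := by
      rw [Complex.rank_real_complex]; exact_mod_cast Nat.one_lt_cast.mpr one_lt_two
    have hsph : IsConnected (sphere (0:ℂ) 1) := isConnected_sphere h2 0 zero_le_one
    have hIoo : IsConnected (Ioo (1:ℝ) R) := isConnected_Ioo hR
    have himg : U = (fun p : ℝ × ℂ => p.1 • p.2) '' (Ioo 1 R ×ˢ sphere (0:ℂ) 1) := by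
      ext z
      constructor
      · rintro ⟨h1, h2'⟩
        have habs : ‖z‖ ≠ 0 := (by linarith : (0:ℝ) < ‖z‖).ne'
        refine ⟨⟨‖z‖, (‖z‖)⁻¹ • z⟩, ⟨⟨h1, h2'⟩, ?_⟩, ?_⟩
        · simp [mem_sphere_iff_norm, norm_smul, abs_of_nonneg (norm_nonneg z),
            habs]
        · simp [smul_smul, habs]
      · rintro ⟨⟨r, w⟩, ⟨⟨hr1, hr2⟩, hw⟩, rfl⟩
        have hw' : ‖w‖ = 1 := by
          simpa [mem_sphere_iff_norm] using hw
        simp only [hU, mem_setOf_eq, Complex.real_smul, norm_mul, Complex.norm_real, Real.norm_eq_abs, hw',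
          mul_one, abs_of_pos (by linarith : (0:ℝ) < r)]
        exact ⟨hr1, hr2⟩
    rw [himg]
    exact ((hIoo.prod hsph).image _ (continuous_smul.continuousOn)).isPreconnected
  -- g is analytic on U
  have hgan : AnalyticOnNhd ℂ g U := hgdiff.analyticOnNhd hUopen
  -- open mapping: g constant
  have habsmid : ‖((1 + R) / 2 : ℂ)‖ = (1 + R) / 2 := by
    rw [show ((1 + R) / 2 : ℂ) = (((1+R)/2 : ℝ) : ℂ) by push_cast; ring,
      Complex.norm_real, Real.norm_eq_abs, abs_of_pos (by linarith)]
  have hne : ((1 + R) / 2 : ℂ) ∈ U := by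
    refine ⟨?_, ?_⟩ <;> rw [habsmid] <;> linarith
  rcases hgan.is_constant_or_isOpen hUconn with ⟨v, hv⟩ | hopen
  · -- v is real
    have hvim : v.im = 0 := by
      rw [← hv _ hne]
      exact him _ (subset_closure hne)
    refine ⟨v.re, fun z hz => ?_⟩
    have hz0 : z ≠ 0 := by
      intro h
      have := hz.1
      rw [h] at this; simp at this; linarith
    have hgz : g z = v := hv z hz
    have hvre : (v.re : ℂ) = v := by
      exact Complex.ext (by simp) (by simp [hvim])
    constructor
    · rw [hvre]; exact hgz
    · rw [hvre]
      field_simp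
      rw [← hgz]; ring
  · -- non-constant case: contradiction
    exfalso
    have hOimg : IsOpen (g '' U) := hopen U (subset_refl _) hUopen
    have hsub : g '' U ⊆ {w : ℂ | w.im = 0} := by
      rintro _ ⟨z, hz, rfl⟩
      exact him z (subset_closure hz)
    -- open nonempty subset of real line: contradiction
    obtain ⟨ε, hε, hball⟩ := Metric.isOpen_iff.mp hOimg (g ((1+R)/2))
      ⟨_, hne, rfl⟩
    have : g ((1+R)/2) + Complex.I * (ε/2 : ℝ) ∈ ball (g ((1+R)/2)) ε := by
      simp only [mem_ball, Complex.dist_eq]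
      rw [add_sub_cancel_left]
      rw [show Complex.I * ((ε/2 : ℝ) : ℂ) = (((ε/2:ℝ)) : ℂ) * Complex.I by ring]
      rw [norm_mul, Complex.norm_I, Complex.norm_real, Real.norm_eq_abs, mul_one,
        abs_of_pos (by linarith)]
      linarith
    have := hsub (hball this)
    simp only [mem_setOf_eq, Complex.add_im, Complex.mul_im, Complex.I_re, Complex.I_im,
      Complex.ofReal_re, Complex.ofReal_im] at this
    have him0 : (g ((1+R)/2)).im = 0 :=
      him _ (subset_closure hne)
    rw [him0] at this
    simp at this
    linarith
end

section
/- Let Σ₀ be a compact minimal surface in ℝ³ with boundary ∂Σ₀ = Γ₁ ∪ Γ₂ ∪ C, where along Γ₁ the position vector Y (relative to a point O₁) equals the outward conormal ν₁, along Γ₂ one has Y = ρ + ν₂ with ρ ≠ 0 a fixed vector and ν₂ the outward conormal, and the remaining boundary C satisfies ∫_C Y·ν ds = 0 and ∫_C Y∧ν ds = 0. If additionally 2|Σ₀| = |Γ₁| + |Γ₂|, then ∫_{Γ₂} ν₂ ds = 0. -/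
open scoped InnerProductSpace

noncomputable def cross3 (u v : EuclideanSpace ℝ (Fin 3)) : EuclideanSpace ℝ (Fin 3) :=
  (WithLp.equiv 2 (Fin 3 → ℝ)).symm
    ![u 1 * v 2 - u 2 * v 1, u 2 * v 0 - u 0 * v 2, u 0 * v 1 - u 1 * v 0]

lemma cross3_self (u : EuclideanSpace ℝ (Fin 3)) : cross3 u u = 0 := by
  ext i; fin_cases i <;> simp [cross3] <;> ring

lemma cross3_add_left (a b v : EuclideanSpace ℝ (Fin 3)) :
    cross3 (a + b) v = cross3 a v + cross3 b v := by
  ext i; fin_cases i <;> simp [cross3] <;> ring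

lemma cross3_inner_zero (ρ w : EuclideanSpace ℝ (Fin 3)) (hρ : ρ ≠ 0)
    (h1 : cross3 ρ w = 0) (h2 : ⟪ρ, w⟫_ℝ = 0) : w = 0 := by
  have e0 := congrFun (congrArg (WithLp.equiv 2 (Fin 3 → ℝ)) h1) 0
  have e1 := congrFun (congrArg (WithLp.equiv 2 (Fin 3 → ℝ)) h1) 1
  have e2 := congrFun (congrArg (WithLp.equiv 2 (Fin 3 → ℝ)) h1) 2
  simp [cross3] at e0 e1 e2
  rw [PiLp.inner_apply, Fin.sum_univ_three] at h2
  simp [RCLike.inner_apply, starRingEnd_apply] at h2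
  have hρ' : ρ 0 ^ 2 + ρ 1 ^ 2 + ρ 2 ^ 2 ≠ 0 := by
    intro h
    apply hρ
    have h0 : ρ 0 = 0 := by nlinarith [sq_nonneg (ρ 0), sq_nonneg (ρ 1), sq_nonneg (ρ 2)]
    have h1' : ρ 1 = 0 := by nlinarith [sq_nonneg (ρ 0), sq_nonneg (ρ 1), sq_nonneg (ρ 2)]
    have h2' : ρ 2 = 0 := by nlinarith [sq_nonneg (ρ 0), sq_nonneg (ρ 1), sq_nonneg (ρ 2)]
    ext i; fin_cases i <;> simpa
  have hsq : w 0 ^ 2 + w 1 ^ 2 + w 2 ^ 2 = 0 := by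
    have key : (ρ 0 ^ 2 + ρ 1 ^ 2 + ρ 2 ^ 2) * (w 0 ^ 2 + w 1 ^ 2 + w 2 ^ 2) = 0 := by
      nlinarith [e0, e1, e2, h2]
    exact (mul_eq_zero.mp key).resolve_left hρ'
  have hw0 : w 0 = 0 := by nlinarith [sq_nonneg (w 0), sq_nonneg (w 1), sq_nonneg (w 2)]
  have hw1 : w 1 = 0 := by nlinarith [sq_nonneg (w 0), sq_nonneg (w 1), sq_nonneg (w 2)]
  have hw2 : w 2 = 0 := by nlinarith [sq_nonneg (w 0), sq_nonneg (w 1), sq_nonneg (w 2)]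
  ext i; fin_cases i <;> simpa

noncomputable def crossL (ρ : EuclideanSpace ℝ (Fin 3)) :
    EuclideanSpace ℝ (Fin 3) →L[ℝ] EuclideanSpace ℝ (Fin 3) :=
  LinearMap.toContinuousLinearMap
    { toFun := cross3 ρ
      map_add' := fun a b => by ext i; fin_cases i <;> simp [cross3] <;> ring
      map_smul' := fun c a => by ext i; fin_cases i <;> simp [cross3] <;> ring }

lemma crossL_apply (ρ v : EuclideanSpace ℝ (Fin 3)) : crossL ρ v = cross3 ρ v := rfl

/-- for a compact minimal surface `Σ₀` with boundary
`Γ₁ ∪ Γ₂ ∪ C` such that the position vector `Y = x - O₁` equals the outward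
conormal `ν₁` along `Γ₁`, equals `ρ + ν₂` along `Γ₂` with `ρ ≠ 0`, the `C`-part
contributes no flux and no torque, and `2|Σ₀| = |Γ₁| + |Γ₂|`, one has
`∫_{Γ₂} ν₂ ds = 0`.  (Boundary integrals are written using unit-speed
parametrizations on `[0, Lᵢ]`; the divergence theorem `2|Σ₀| = ∫_{∂Σ₀} Y·ν ds`
and the torque identity `∫_{∂Σ₀} Y∧ν ds = 0` for minimal surfaces are taken as
hypotheses.) -/
theorem flux_of_fundamental_piece_vanishes
    (area L₁ L₂ LC : ℝ) (hL1 : 0 ≤ L₁) (hL2 : 0 ≤ L₂) (hLC : 0 ≤ LC)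
    (O₁ ρ : EuclideanSpace ℝ (Fin 3)) (hρ : ρ ≠ 0)
    (γ₁ ν₁ γ₂ ν₂ γC νC : ℝ → EuclideanSpace ℝ (Fin 3))
    (hc1 : Continuous γ₁) (hc2 : Continuous ν₁) (hc3 : Continuous γ₂)
    (hc4 : Continuous ν₂) (hc5 : Continuous γC) (hc6 : Continuous νC)
    -- `Y = ν₁` along `Γ₁` (orthogonality to the unit sphere centered at `O₁`)
    (hY1 : ∀ t ∈ Set.Icc 0 L₁, γ₁ t - O₁ = ν₁ t ∧ ‖ν₁ t‖ = 1)
    -- `Y = ρ + ν₂` along `Γ₂` (orthogonality to the unit sphere centered at `O₁ + ρ`)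
    (hY2 : ∀ t ∈ Set.Icc 0 L₂, γ₂ t - O₁ = ρ + ν₂ t ∧ ‖ν₂ t‖ = 1)
    -- the remaining boundary `C` contributes no flux and no torque
    (hCdot : (∫ t in (0:ℝ)..LC, ⟪γC t - O₁, νC t⟫_ℝ) = 0)
    (hCcross : (∫ t in (0:ℝ)..LC, cross3 (γC t - O₁) (νC t)) = 0)
    -- divergence theorem: `2|Σ₀| = ∫_{∂Σ₀} Y·ν ds`
    (hdiv : 2 * area = (∫ t in (0:ℝ)..L₁, ⟪γ₁ t - O₁, ν₁ t⟫_ℝ)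
        + (∫ t in (0:ℝ)..L₂, ⟪γ₂ t - O₁, ν₂ t⟫_ℝ)
        + ∫ t in (0:ℝ)..LC, ⟪γC t - O₁, νC t⟫_ℝ)
    -- torque identity: `∫_{∂Σ₀} Y∧ν ds = 0`
    (htorque : (∫ t in (0:ℝ)..L₁, cross3 (γ₁ t - O₁) (ν₁ t))
        + (∫ t in (0:ℝ)..L₂, cross3 (γ₂ t - O₁) (ν₂ t))
        + (∫ t in (0:ℝ)..LC, cross3 (γC t - O₁) (νC t)) = 0)
    -- the area-length relation `2|Σ₀| = |Γ₁| + |Γ₂|`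
    (harea : 2 * area = L₁ + L₂) :
    (∫ t in (0:ℝ)..L₂, ν₂ t) = 0 := by
  set w : EuclideanSpace ℝ (Fin 3) := ∫ t in (0:ℝ)..L₂, ν₂ t with hw
  -- Γ₁ flux integral equals L₁
  have hI1 : (∫ t in (0:ℝ)..L₁, ⟪γ₁ t - O₁, ν₁ t⟫_ℝ) = L₁ := by
    have : (∫ t in (0:ℝ)..L₁, ⟪γ₁ t - O₁, ν₁ t⟫_ℝ) = ∫ _ in (0:ℝ)..L₁, (1:ℝ) := by
      apply intervalIntegral.integral_congr
      intro t ht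
      rw [Set.uIcc_of_le hL1] at ht
      obtain ⟨heq, hn⟩ := hY1 t ht
      dsimp only
      rw [heq, real_inner_self_eq_norm_sq, hn]; norm_num
    simpa using this
  -- Γ₂ flux integral equals ⟪ρ, w⟫ + L₂
  have hint2 : IntervalIntegrable (fun t => ⟪ρ, ν₂ t⟫_ℝ) MeasureTheory.volume 0 L₂ :=
    (continuous_const.inner hc4).intervalIntegrable 0 L₂
  have hI2 : (∫ t in (0:ℝ)..L₂, ⟪γ₂ t - O₁, ν₂ t⟫_ℝ) = ⟪ρ, w⟫_ℝ + L₂ := by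
    have h1 : (∫ t in (0:ℝ)..L₂, ⟪γ₂ t - O₁, ν₂ t⟫_ℝ)
        = ∫ t in (0:ℝ)..L₂, (⟪ρ, ν₂ t⟫_ℝ + 1) := by
      apply intervalIntegral.integral_congr
      intro t ht
      rw [Set.uIcc_of_le hL2] at ht
      obtain ⟨heq, hn⟩ := hY2 t ht
      dsimp only
      rw [heq, inner_add_left, real_inner_self_eq_norm_sq, hn]; norm_num
    rw [h1, intervalIntegral.integral_add hint2 intervalIntegrable_const]
    have h2 : (∫ t in (0:ℝ)..L₂, ⟪ρ, ν₂ t⟫_ℝ) = ⟪ρ, w⟫_ℝ := by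
      have := (innerSL ℝ ρ).intervalIntegral_comp_comm
        (μ := MeasureTheory.volume) (a := 0) (b := L₂) (hc4.intervalIntegrable 0 L₂)
      simpa using this
    rw [h2]; simp
  have hinner : ⟪ρ, w⟫_ℝ = 0 := by
    rw [hI1, hI2, hCdot, harea] at hdiv; linarith
  -- torque
  have hT1 : (∫ t in (0:ℝ)..L₁, cross3 (γ₁ t - O₁) (ν₁ t)) = 0 := by
    have : (∫ t in (0:ℝ)..L₁, cross3 (γ₁ t - O₁) (ν₁ t))
        = ∫ _ in (0:ℝ)..L₁, (0 : EuclideanSpace ℝ (Fin 3)) := by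
      apply intervalIntegral.integral_congr
      intro t ht
      rw [Set.uIcc_of_le hL1] at ht
      dsimp only
      rw [(hY1 t ht).1, cross3_self]
    simpa using this
  have hT2 : (∫ t in (0:ℝ)..L₂, cross3 (γ₂ t - O₁) (ν₂ t)) = cross3 ρ w := by
    have h1 : (∫ t in (0:ℝ)..L₂, cross3 (γ₂ t - O₁) (ν₂ t))
        = ∫ t in (0:ℝ)..L₂, cross3 ρ (ν₂ t) := by
      apply intervalIntegral.integral_congr
      intro t ht
      rw [Set.uIcc_of_le hL2] at ht
      dsimp only
      rw [(hY2 t ht).1, cross3_add_left, cross3_self, add_zero]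
    rw [h1]
    have := (crossL ρ).intervalIntegral_comp_comm
      (μ := MeasureTheory.volume) (a := 0) (b := L₂) (hc4.intervalIntegrable 0 L₂)
    simpa [crossL_apply] using this
  have hcross : cross3 ρ w = 0 := by
    rw [hT1, hT2, hCcross] at htorque; simpa using htorque
  exact cross3_inner_zero ρ w hρ hcross hinner
end
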